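/- arXiv:1301.7597 — 2 statements merged into one kernel-verified Lean document; each statement's English description precedes it below -/
import Mathlib

section
/- Let G be a factorizable graph with perfect matching M, and let u, v be distinct vertices in the same factor-connected component of G. Then G − u − v is factorizable if and only if there exists an M-saturated path between u and v in G. -/
open SimpleGraph

variable {V : Type*}

/-- `M` is a matching of `G`, given as a set of edges. -/
def IsMatchingSet (G : SimpleGraph V) (M : Set (Sym2 V)) : Prop :=
  M ⊆ G.edgeSet ∧ ∀ (v : V), ∀ e ∈ M, ∀ f ∈ M, v ∈ e → v ∈ f → e = f

/-- `M` is a perfect matching of `G`: every vertex lies on exactly one edge of `M`. -/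
def IsPerfectMatchingSet (G : SimpleGraph V) (M : Set (Sym2 V)) : Prop :=
  M ⊆ G.edgeSet ∧ ∀ v : V, ∃! e, e ∈ M ∧ v ∈ e

/-- `M` is a maximum matching of `G`. -/
def IsMaximumMatchingSet (G : SimpleGraph V) (M : Set (Sym2 V)) : Prop :=
  IsMatchingSet G M ∧ ∀ M', IsMatchingSet G M' → M'.ncard ≤ M.ncard

/-- `v` is exposed by the matching `M`. -/
def ExposedBy (M : Set (Sym2 V)) (v : V) : Prop := ∀ e ∈ M, v ∉ e

/-- The Gallai–Edmonds set `D(G)`: vertices missed by some maximum matching. -/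
def Dset (G : SimpleGraph V) : Set V :=
  {v | ∃ M, IsMaximumMatchingSet G M ∧ ExposedBy M v}

/-- `A(G) = Γ_G(D(G))`, the neighbors of `D(G)` outside `D(G)`. -/
def Aset (G : SimpleGraph V) : Set V :=
  {v | v ∉ Dset G ∧ ∃ u ∈ Dset G, G.Adj u v}

/-- `C(G) = V(G) \ (D(G) ∪ A(G))`. -/
def Cset (G : SimpleGraph V) : Set V :=
  {v | v ∉ Dset G ∧ v ∉ Aset G}

/-- A graph is factorizable if it has a perfect matching. -/
def Factorizable (G : SimpleGraph V) : Prop := ∃ M, IsPerfectMatchingSet G M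

/-- A walk is `M`-alternating if its edges alternate between `M` and its complement. -/
def IsAltWalk {G : SimpleGraph V} {u v : V} (M : Set (Sym2 V)) (p : G.Walk u v) : Prop :=
  List.Chain' (fun e f => e ∈ M ↔ f ∉ M) p.edges

/-- An `M`-balanced path from `u` to `v`: an even `M`-alternating path whose matching
edges form a near-perfect matching of the path exposing only `v` (first edge is in `M`). -/
def IsBalancedPath {G : SimpleGraph V} {u v : V} (M : Set (Sym2 V)) (p : G.Walk u v) : Prop :=
  p.IsPath ∧ Even p.length ∧ IsAltWalk M p ∧ ∀ e, p.edges.head? = some e → e ∈ M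

/-- An `M`-saturated path: odd `M`-alternating, matching edges perfectly cover the path. -/
def IsSaturatedPath {G : SimpleGraph V} {u v : V} (M : Set (Sym2 V)) (p : G.Walk u v) : Prop :=
  p.IsPath ∧ Odd p.length ∧ IsAltWalk M p ∧ ∀ e, p.edges.head? = some e → e ∈ M

/-- An `M`-exposed path: odd `M`-alternating, non-matching edges perfectly cover the path. -/
def IsExposedPath {G : SimpleGraph V} {u v : V} (M : Set (Sym2 V)) (p : G.Walk u v) : Prop :=
  p.IsPath ∧ Odd p.length ∧ IsAltWalk M p ∧ ∀ e, p.edges.head? = some e → e ∉ M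

/-- The allowed edges of `G`: edges lying in some perfect matching. -/
def allowedEdges (G : SimpleGraph V) : Set (Sym2 V) :=
  {e | ∃ M, IsPerfectMatchingSet G M ∧ e ∈ M}

/-- `u` and `v` lie in the same factor-connected component of `G`. -/
def SameFC (G : SimpleGraph V) (u v : V) : Prop :=
  (SimpleGraph.fromEdgeSet (allowedEdges G)).Reachable u v

/-- `X` is separating: every factor-connected component lies inside `X` or misses `X`. -/
def IsSeparating (G : SimpleGraph V) (X : Set V) : Prop :=
  ∀ u v : V, SameFC G u v → (u ∈ X ↔ v ∈ X)

/-- A factorizable graph `G` is saturated if adding any non-edge strictly increases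
the number of perfect matchings. -/
def Saturated (G : SimpleGraph V) : Prop :=
  Factorizable G ∧ ∀ x y : V, x ≠ y → ¬ G.Adj x y →
    {N | IsPerfectMatchingSet G N}.ncard <
      {N | IsPerfectMatchingSet (G ⊔ SimpleGraph.fromEdgeSet {s(x, y)}) N}.ncard

/-!
A perfect matching of a graph is the same as a fixed-point-free involution `m` of its vertices
along edges, and a perfect matching of `G - u - v` is an involution `k` along edges whose fixed
points are exactly `u` and `v`.

If `P` is an `M`-saturated `u`-`v` path, flipping `M` along `P` gives such a `k`; peeling off the
first two edges `ua ∈ M`, `ab ∉ M` of `P`, this is conjugation by the transposition of `u` and `b`.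

Conversely, let `σ = k ∘ m`. Since `k u = u`, the involution `m` reflects the `σ`-orbit of `u`,
sending `σ^j u` to `σ^(-j-1) u`; as `m` has no fixed points, the orbit has even length `2r`, and
the walk `u, m u, σ u, m (σ u), …, m (σ^(r-1) u) = σ^r u` has no repeated vertex, alternates
between edges of `M` (from `m`) and edges outside `M` (from `k`), and ends at the fixed point
`σ^r u ≠ u` of `k`, which must be `v`.
-/

open Function

theorem IsPerfectMatchingSet.exists_partner {H : SimpleGraph V} {M : Set (Sym2 V)}
    (hM : IsPerfectMatchingSet H M) :
    ∃ m : V → V, Involutive m ∧ (∀ x, H.Adj x (m x)) ∧ ∀ x y, s(x, y) ∈ M ↔ y = m x := by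
  have hcover : ∀ x, ∃ y, s(x, y) ∈ M := fun x => by
    obtain ⟨e, ⟨he, hx⟩, -⟩ := hM.2 x
    obtain ⟨y, rfl⟩ := Sym2.mem_iff_exists.mp hx
    exact ⟨y, he⟩
  choose m hm using hcover
  have hiff : ∀ x y, s(x, y) ∈ M ↔ y = m x := fun x y =>
    ⟨fun h => Sym2.congr_right.mp
      ((hM.2 x).unique ⟨h, Sym2.mem_mk_left x y⟩ ⟨hm x, Sym2.mem_mk_left x _⟩),
     fun h => h ▸ hm x⟩
  refine ⟨m, fun x => ?_, fun x => hM.1 (hm x), hiff⟩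
  exact ((hiff (m x) x).mp (Sym2.eq_swap ▸ hm x)).symm

theorem factorizable_iff_exists_involutive {H : SimpleGraph V} :
    Factorizable H ↔ ∃ φ : V → V, Involutive φ ∧ ∀ x, H.Adj x (φ x) := by
  constructor
  · rintro ⟨M, hM⟩
    obtain ⟨m, hinv, hadj, -⟩ := hM.exists_partner
    exact ⟨m, hinv, hadj⟩
  · rintro ⟨φ, hφ, hadj⟩
    refine ⟨Set.range fun x => s(x, φ x), ?_, fun x =>
      ⟨s(x, φ x), ⟨⟨x, rfl⟩, Sym2.mem_mk_left _ _⟩, ?_⟩⟩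
    · rintro _ ⟨x, rfl⟩
      exact hadj x
    · rintro _ ⟨⟨y, rfl⟩, hx⟩
      rcases Sym2.mem_iff.mp hx with rfl | rfl
      · rfl
      · rw [hφ y, Sym2.eq_swap]

theorem factorizable_induce_iff {G : SimpleGraph V} {S : Set V} :
    Factorizable (G.induce S) ↔
      ∃ k : V → V, Involutive k ∧ (∀ x ∉ S, k x = x) ∧ ∀ x ∈ S, G.Adj x (k x) := by
  classical
  rw [factorizable_iff_exists_involutive]
  constructor
  · rintro ⟨φ, hφ, hadj⟩
    refine ⟨fun x => if hx : x ∈ S then φ ⟨x, hx⟩ else x, fun x => ?_,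
      fun x hx => dif_neg hx, fun x hx => by simpa [dif_pos hx] using hadj ⟨x, hx⟩⟩
    by_cases hx : x ∈ S
    · simp [hx, hφ ⟨x, hx⟩]
    · simp [hx]
  · rintro ⟨k, hk, hfix, hadj⟩
    have hkS : ∀ x ∈ S, k x ∈ S := fun x hx => by_contra fun hkx =>
      (hadj x hx).ne ((hk x).symm.trans (hfix _ hkx))
    exact ⟨fun x => ⟨k x, hkS x x.2⟩, fun x => Subtype.ext (hk x),
      fun x => induce_adj.mpr (hadj x x.2)⟩

theorem Function.Involutive.exists_fixing_pair {α : Type*} {m : α → α} (hm : Involutive m)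
    (u : α) : ∃ k : α → α, Involutive k ∧ k u = u ∧ k (m u) = m u ∧
      ∀ x, x ≠ u → x ≠ m u → k x = m x := by
  classical
  refine ⟨fun x => if x = u ∨ x = m u then x else m x, fun x => ?_, by simp, by simp,
    fun x hxu hxv => by simp [hxu, hxv]⟩
  by_cases hx : x = u ∨ x = m u
  · simp [hx]
  · have hmx : ¬ (m x = u ∨ m x = m u) := by
      rintro (h | h)
      · exact hx (Or.inr (by rw [← h, hm]))
      · exact hx (Or.inl (hm.injective h))
    simp [hx, hmx, hm x]

theorem Function.Involutive.apply_iterate_comp_of_fixed {α : Type*} {m k : α → α}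
    (hm : Involutive m) (hk : Involutive k) {u : α} (hu : k u = u) {j : ℕ}
    (hj : j < minimalPeriod (k ∘ m) u) :
    m ((k ∘ m)^[j] u) = (k ∘ m)^[minimalPeriod (k ∘ m) u - 1 - j] u := by
  have hinj : Injective (k ∘ m) := hk.injective.comp hm.injective
  have hconj_one : ∀ x, (k ∘ m) (k ((k ∘ m) x)) = k x := fun x => by
    simp only [comp_apply, hk (m x), hm x]
  have hconj : ∀ i x, (k ∘ m)^[i] (k ((k ∘ m)^[i] x)) = k x := by
    intro i
    induction i with
    | zero => exact fun _ => rfl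
    | succ i ih =>
      intro x
      rw [iterate_succ_apply, iterate_succ_apply', hconj_one, ih]
  apply hinj.iterate (j + 1)
  rw [← iterate_add_apply, show j + 1 + (minimalPeriod (k ∘ m) u - 1 - j) =
    minimalPeriod (k ∘ m) u by omega, iterate_minimalPeriod, iterate_succ_apply, comp_apply,
    hm, hconj, hu]

theorem Function.Involutive.exists_alternating_injOn {α : Type*} [Finite α] {m k : α → α}
    (hm : Involutive m) (hk : Involutive k) (hm_ne : ∀ x, m x ≠ x) {u : α} (hu : k u = u) :
    ∃ n f, Odd n ∧ f 0 = u ∧ k (f n) = f n ∧ Set.InjOn f (Set.Iic n) ∧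
      (∀ i < n, Even i → f (i + 1) = m (f i)) ∧ (∀ i < n, Odd i → f (i + 1) = k (f i)) := by
  set σ := k ∘ m with hσ
  set N := minimalPeriod σ u
  have hN : 0 < N :=
    minimalPeriod_pos_of_mem_periodicPts ((hk.injective.comp hm.injective).mem_periodicPts u)
  have hmσ : ∀ j < N, m (σ^[j] u) = σ^[N - 1 - j] u := fun j hj =>
    hm.apply_iterate_comp_of_fixed hk hu hj
  obtain ⟨r, hr⟩ : Even N := by
    by_contra hodd
    obtain ⟨s, hs⟩ := Nat.not_even_iff_odd.mp hodd
    have := hmσ s (by omega)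
    rw [show N - 1 - s = s by omega] at this
    exact hm_ne _ this
  set f : ℕ → α := fun i => if Even i then σ^[i / 2] u else m (σ^[i / 2] u)
  have hf_iter : ∀ i < N, f i = σ^[if Even i then i / 2 else N - 1 - i / 2] u := by
    intro i hi
    by_cases h : Even i
    · simp [f, h]
    · simp [f, h, hmσ (i / 2) (by omega)]
  refine ⟨N - 1, f, ⟨r - 1, by omega⟩, by simp [f], ?_, ?_, ?_, ?_⟩
  · have hodd : ¬ Even (N - 1) := by rw [Nat.not_even_iff_odd]; exact ⟨r - 1, by omega⟩
    simp only [f, hodd, if_false]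
    rw [← comp_apply (f := k), ← hσ, ← iterate_succ_apply' σ, hmσ _ (by omega)]
    congr 1
    omega
  · intro i hi j hj hij
    rw [Set.mem_Iic] at hi hj
    rw [hf_iter i (by omega), hf_iter j (by omega)] at hij
    have := iterate_injOn_Iio_minimalPeriod (f := σ) (x := u)
      (by split_ifs <;> (rw [Set.mem_Iio]; omega)) (by split_ifs <;> (rw [Set.mem_Iio]; omega)) hij
    split_ifs at this <;> rw [Nat.even_iff] at * <;> omega
  · intro i _ he
    have : ¬ Even (i + 1) := by simpa [Nat.even_add_one] using he
    simp [f, he, this, show (i + 1) / 2 = i / 2 by rw [Nat.even_iff] at he; omega]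
  · intro i _ ho
    have hne : ¬ Even i := Nat.not_even_iff_odd.mpr ho
    have : Even (i + 1) := by simpa [Nat.even_add_one] using hne
    simp only [f, hne, this, if_true, if_false]
    rw [show (i + 1) / 2 = i / 2 + 1 by rw [Nat.not_even_iff] at hne; omega,
      iterate_succ_apply', hσ, comp_apply]

theorem List.isChain_iff_not_and_head_iff_even {α : Type*} {P : α → Prop} {l : List α} :
    (l.IsChain (fun a b => P a ↔ ¬ P b) ∧ ∀ a, l.head? = some a → P a) ↔
      ∀ i (hi : i < l.length), (P l[i] ↔ Even i) := by
  constructor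
  · rintro ⟨hc, hh⟩ i hi
    induction i with
    | zero => simpa using hh l[0] (by simp [List.head?_eq_getElem?])
    | succ i ih =>
      have := List.isChain_iff_getElem.mp hc i hi
      rw [Nat.even_add_one, ← ih (by omega)]
      tauto
  · intro h
    refine ⟨List.isChain_iff_getElem.mpr fun i hi => ?_, fun a ha => ?_⟩
    · rw [h i (by omega), h (i + 1) hi, Nat.even_add_one, not_not]
    · cases l with
      | nil => simp at ha
      | cons b l =>
        simp only [List.head?_cons, Option.some.injEq] at ha
        simpa [ha] using h 0 (by simp)

theorem SimpleGraph.exists_walk_getVert_eq {G : SimpleGraph V} (n : ℕ) (f : ℕ → V)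
    (hadj : ∀ i < n, G.Adj (f i) (f (i + 1))) :
    ∃ p : G.Walk (f 0) (f n), p.length = n ∧ ∀ i ≤ n, p.getVert i = f i := by
  induction n generalizing f with
  | zero => exact ⟨.nil, rfl, fun i hi => by simp [Nat.le_zero.mp hi]⟩
  | succ n ih =>
    obtain ⟨q, hlen, hq⟩ := ih (fun i => f (i + 1)) fun i hi => hadj (i + 1) (by omega)
    refine ⟨.cons (hadj 0 (by omega)) q, by simp [hlen], fun i hi => ?_⟩
    cases i with
    | zero => simp
    | succ i => simp [Walk.getVert_cons_succ, hq i (by omega)]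

theorem isAltWalk_iff {G : SimpleGraph V} {M : Set (Sym2 V)} {u v : V} (p : G.Walk u v) :
    IsAltWalk M p ↔ p.edges.IsChain (fun e f => e ∈ M ↔ f ∉ M) :=
  Iff.rfl

theorem isSaturatedPath_iff_getVert {G : SimpleGraph V} {M : Set (Sym2 V)} {u v : V}
    (p : G.Walk u v) :
    IsSaturatedPath M p ↔ p.IsPath ∧ Odd p.length ∧
      ∀ i < p.length, (s(p.getVert i, p.getVert (i + 1)) ∈ M ↔ Even i) := by
  rw [IsSaturatedPath, isAltWalk_iff, List.isChain_iff_not_and_head_iff_even (P := (· ∈ M))]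
  simp [Walk.getElem_edges]

section SaturatedPath

variable {G : SimpleGraph V} {M : Set (Sym2 V)}

theorem IsSaturatedPath.ne {u v : V} {p : G.Walk u v} (hp : IsSaturatedPath M p) : u ≠ v := by
  rintro rfl
  have hlen := Walk.length_eq_zero_iff.mpr (Walk.isPath_iff_nil.mp hp.1)
  exact Nat.not_odd_zero (hlen ▸ hp.2.1)

theorem IsSaturatedPath.of_cons_cons {u a b v : V} {h : G.Adj u a} {h' : G.Adj a b}
    {q : G.Walk b v} (hp : IsSaturatedPath M (.cons h (.cons h' q))) :
    s(u, a) ∈ M ∧ s(a, b) ∉ M ∧ IsSaturatedPath M q := by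
  obtain ⟨hpath, ⟨r, hr⟩, halt, hhead⟩ := hp
  rw [isAltWalk_iff, Walk.edges_cons, Walk.edges_cons, List.isChain_cons_cons] at halt
  have hua : s(u, a) ∈ M := hhead _ rfl
  have hab : s(a, b) ∉ M := halt.1.mp hua
  refine ⟨hua, hab, hpath.of_cons.of_cons,
    ⟨r - 1, by simp only [Walk.length_cons] at hr; omega⟩, ?_, fun e he => ?_⟩
  · exact (isAltWalk_iff q).mpr halt.2.tail
  · obtain ⟨l, hl⟩ := List.head?_eq_some_iff.mp he
    rw [hl, List.isChain_cons_cons] at halt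
    by_contra he'
    exact hab (halt.2.1.mpr he')

theorem IsSaturatedPath.exists_involutive {m : V → V} (hmi : Involutive m)
    (hmadj : ∀ x, G.Adj x (m x)) (hm : ∀ x y, s(x, y) ∈ M ↔ y = m x) :
    ∀ {u v : V} (p : G.Walk u v), IsSaturatedPath M p →
      ∃ k : V → V, Involutive k ∧ (∀ x ∉ ({u, v}ᶜ : Set V), k x = x) ∧
        (∀ x ∈ ({u, v}ᶜ : Set V), G.Adj x (k x)) ∧ ∀ x ∉ p.support, k x = m x
  | _, _, .nil, hp => (Nat.not_odd_zero hp.2.1).elim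
  | u, v, .cons h .nil, hp => by
    obtain rfl : v = m u := (hm u v).mp (hp.2.2.2 _ rfl)
    obtain ⟨k, hk, hku, hkv, hkm⟩ := hmi.exists_fixing_pair u
    refine ⟨k, hk, fun x hx => ?_, fun x hx => ?_, fun x hx => ?_⟩
    · simp only [Set.mem_compl_iff, not_not, Set.mem_insert_iff, Set.mem_singleton_iff] at hx
      rcases hx with rfl | rfl
      exacts [hku, hkv]
    · simp only [Set.mem_compl_iff, Set.mem_insert_iff, Set.mem_singleton_iff, not_or] at hx
      exact hkm x hx.1 hx.2 ▸ hmadj x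
    · simp only [Walk.support_cons, Walk.support_nil, List.mem_cons, List.not_mem_nil,
        or_false, not_or] at hx
      exact hkm x hx.1 hx.2
  | u, v, .cons (v := a) h (.cons (v := b) h' q), hp => by
    classical
    obtain ⟨hua, hab, hq⟩ := hp.of_cons_cons
    obtain ⟨k, hk, hfix, hadj, hoff⟩ := IsSaturatedPath.exists_involutive hmi hmadj hm q hq
    have hu_q : u ∉ (Walk.cons h' q).support := (Walk.cons_isPath_iff _ _).mp hp.1 |>.2
    have ha_q : a ∉ q.support := (Walk.cons_isPath_iff _ _).mp hp.1.of_cons |>.2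
    simp only [Walk.support_cons, List.mem_cons, not_or] at hu_q
    have hbq : b ∈ q.support := q.start_mem_support
    have hvq : v ∈ q.support := q.end_mem_support
    have hbv : b ≠ v := hq.ne
    have hku : k u = a := by rw [hoff u hu_q.2, ← (hm u a).mp hua]
    have hka : k a = u := by rw [← hku, hk u]
    have hkb : k b = b := hfix b (by simp)
    have hab' : a ≠ b := fun h => ha_q (h ▸ hbq)
    have hconj : ∀ x, x ≠ u → x ≠ a → x ≠ b → Equiv.swap u b (k (Equiv.swap u b x)) = k x := by
      intro x hxu hxa hxb
      have hkxu : k x ≠ u := fun h => hxa (by rw [← hku, ← h, hk])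
      have hkxb : k x ≠ b := fun h => hxb (by rw [← hkb, ← h, hk])
      rw [Equiv.swap_apply_of_ne_of_ne hxu hxb, Equiv.swap_apply_of_ne_of_ne hkxu hkxb]
    refine ⟨Equiv.swap u b ∘ k ∘ Equiv.swap u b, fun x => by simp [hk _], fun x hx => ?_,
      fun x hx => ?_, fun x hx => ?_⟩
    · simp only [Set.mem_compl_iff, not_not, Set.mem_insert_iff, Set.mem_singleton_iff] at hx
      rcases hx with rfl | rfl
      · simp [hkb]
      · rw [comp_apply, comp_apply, hconj x (fun h => hu_q.2 (h ▸ hvq))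
          (fun h => ha_q (h ▸ hvq)) (Ne.symm hbv), hfix x (by simp)]
    · simp only [Set.mem_compl_iff, Set.mem_insert_iff, Set.mem_singleton_iff, not_or] at hx
      by_cases hxa : x = a
      · subst hxa
        simpa [Equiv.swap_apply_of_ne_of_ne hx.1 hab', hka] using h'
      by_cases hxb : x = b
      · subst hxb
        simpa [hku, Equiv.swap_apply_of_ne_of_ne (Ne.symm hu_q.1) hab'] using h'.symm
      rw [comp_apply, comp_apply, hconj x hx.1 hxa hxb]
      exact hadj x (by simp [hxb, hx.2])
    · simp only [Walk.support_cons, List.mem_cons, not_or] at hx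
      rw [comp_apply, comp_apply, hconj x hx.1 hx.2.1 (fun h => hx.2.2 (h ▸ hbq)), hoff x hx.2.2]

theorem exists_isSaturatedPath_of_involutive [Finite V] {m k : V → V} (hmi : Involutive m)
    (hmadj : ∀ x, G.Adj x (m x)) (hm : ∀ x y, s(x, y) ∈ M ↔ y = m x) {u v : V}
    (hk : Involutive k) (hfix : ∀ x ∉ ({u, v}ᶜ : Set V), k x = x)
    (hadj : ∀ x ∈ ({u, v}ᶜ : Set V), G.Adj x (k x)) :
    ∃ p : G.Walk u v, IsSaturatedPath M p := by
  obtain ⟨n, f, hn, hf0, hfn, hinj, heven, hodd⟩ :=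
    hmi.exists_alternating_injOn hk (fun x => (hmadj x).ne.symm) (hfix u (by simp))
  have hf_ne : ∀ i ≤ n, ∀ j ≤ n, f i = f j → i = j := fun i hi j hj h =>
    hinj (Set.mem_Iic.mpr hi) (Set.mem_Iic.mpr hj) h
  have hfix_mem : ∀ x, k x = x → x = u ∨ x = v := fun x hx => by
    by_contra h
    exact (hadj x (by simpa using h)).ne hx.symm
  have hfn_v : f n = v :=
    (hfix_mem _ hfn).resolve_left fun h => by
      have := hf_ne n le_rfl 0 (Nat.zero_le n) (h.trans hf0.symm)
      exact Nat.not_odd_zero (this ▸ hn)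
  have hadj_f : ∀ i < n, G.Adj (f i) (f (i + 1)) := by
    intro i hi
    rcases Nat.even_or_odd i with he | ho
    · exact heven i hi he ▸ hmadj (f i)
    · rw [hodd i hi ho]
      refine hadj _ fun hS => ?_
      have := hf_ne i hi.le (i + 1) hi
        ((hfix _ (not_not_intro hS)).symm.trans (hodd i hi ho).symm)
      omega
  have halt_f : ∀ i < n, (s(f i, f (i + 1)) ∈ M ↔ Even i) := by
    intro i hi
    rcases Nat.even_or_odd i with he | ho
    · exact iff_of_true ((hm _ _).mpr (heven i hi he)) he
    · refine iff_of_false (fun hM => ?_) (Nat.not_even_iff_odd.mpr ho)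
      obtain ⟨j, rfl⟩ := ho
      have hprev : f (2 * j + 1) = m (f (2 * j)) := heven (2 * j) (by omega) (even_two_mul j)
      have := hf_ne (2 * j + 1 + 1) hi (2 * j) (by omega)
        (by rw [(hm _ _).mp hM, hprev, hmi])
      omega
  obtain ⟨p, hlen, hp⟩ := SimpleGraph.exists_walk_getVert_eq n f hadj_f
  subst hf0 hfn_v
  refine ⟨p, (isSaturatedPath_iff_getVert p).mpr ⟨?_, hlen.symm ▸ hn, fun i hi => ?_⟩⟩
  · refine (Walk.IsPath.getVert_injOn_iff p).mp fun i hi j hj h => ?_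
    simp only [Set.mem_ofPred_eq, hlen] at hi hj
    rw [hp i hi, hp j hj] at h
    exact hf_ne i hi j hj h
  · rw [hlen] at hi
    rw [hp i hi.le, hp (i + 1) hi]
    exact halt_f i hi

end SaturatedPath

theorem stmt7_general [Finite V] (G : SimpleGraph V) (M : Set (Sym2 V))
    (hM : IsPerfectMatchingSet G M) (u v : V) :
    Factorizable (G.induce ({u, v}ᶜ : Set V)) ↔
      ∃ p : G.Walk u v, IsSaturatedPath M p := by
  obtain ⟨m, hmi, hmadj, hm⟩ := hM.exists_partner
  rw [factorizable_induce_iff]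
  constructor
  · rintro ⟨k, hk, hfix, hadj⟩
    exact exists_isSaturatedPath_of_involutive hmi hmadj hm hk hfix hadj
  · rintro ⟨p, hp⟩
    obtain ⟨k, hk, hfix, hadj, -⟩ := hp.exists_involutive hmi hmadj hm p
    exact ⟨k, hk, hfix, hadj⟩

theorem stmt7 [Finite V] (G : SimpleGraph V) (M : Set (Sym2 V))
    (hM : IsPerfectMatchingSet G M) (u v : V) (hne : u ≠ v) (hfc : SameFC G u v) :
    Factorizable (G.induce ({u, v}ᶜ : Set V)) ↔
      ∃ p : G.Walk u v, IsSaturatedPath M p :=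
  stmt7_general G M hM u v
end

section
/- Let M be a near-perfect matching of a graph G exposing the vertex v. Then G is factor-critical if and only if for every vertex u of G there exists an M-balanced path from u to v. -/
open SimpleGraph

variable {V : Type*}

/-!
Switching a near-perfect matching `M` along an `M`-balanced path from `u` to `v` gives a
matching exposing exactly `u`, i.e. a perfect matching of `G - u`. Conversely, let `M'` expose
exactly `u ≠ v`; follow the `M`-edge `ua` and then the `M'`-edge `ab`. Exchanging `ab` for `ua`
in `M'` gives a matching exposing `b` that has fewer edges outside `M`, so by induction there is
a balanced path from `b` to `v`. It avoids every vertex on an edge common to `M` and the new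
matching, hence avoids `u` and `a`, and `u a b` extends it to a balanced path from `u`.
-/

lemma Set.ncard_insert_sdiff_singleton_sdiff_lt {α : Type*} {s t : Set α} {a b : α}
    (ht : t.Finite) (ha : a ∈ s) (hb : b ∈ t \ s) :
    (insert a (t \ {b}) \ s).ncard < (t \ s).ncard := by
  rw [Set.insert_sdiff_of_mem _ ha, sdiff_right_comm]
  exact Set.ncard_sdiff_singleton_lt_of_mem hb ht.sdiff

def IsNearPerfectMatchingSet (G : SimpleGraph V) (M : Set (Sym2 V)) (w : V) : Prop :=
  IsMatchingSet G M ∧ ∀ x, (∃ e ∈ M, x ∈ e) ↔ x ≠ w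

section

variable {G : SimpleGraph V} {M M' : Set (Sym2 V)} {u v w : V}

namespace IsNearPerfectMatchingSet

lemma notMem_of_mem (hM : IsNearPerfectMatchingSet G M w) {e : Sym2 V} (he : e ∈ M) : w ∉ e :=
  fun hw => (hM.2 w).1 ⟨e, he, hw⟩ rfl

lemma exchange (hM : IsNearPerfectMatchingSet G M w) {y z : V} (hyz : s(y, z) ∈ M)
    (hzw : G.Adj z w) : IsNearPerfectMatchingSet G (insert s(z, w) (M \ {s(y, z)})) y := by
  have hyw : y ≠ w := fun h => hM.notMem_of_mem hyz (h ▸ Sym2.mem_mk_left y z)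
  have hyz' : y ≠ z := G.ne_of_adj (hM.1.1 hyz)
  have hM_at : ∀ x ∈ s(y, z), ∀ e ∈ M, x ∈ e → e = s(y, z) :=
    fun x hx e he hxe => hM.1.2 x e he _ hyz hxe hx
  have hdisj : ∀ x ∈ s(z, w), ∀ e ∈ M \ {s(y, z)}, x ∉ e := by
    rintro x hx e ⟨he, hne⟩ hxe
    rcases Sym2.mem_iff.1 hx with rfl | rfl
    · exact hne (hM_at x (Sym2.mem_mk_right y x) e he hxe)
    · exact hM.notMem_of_mem he hxe
  refine ⟨⟨?_, ?_⟩, fun x => ⟨?_, fun hxy => ?_⟩⟩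
  · rintro e (rfl | ⟨he, -⟩)
    exacts [hzw, hM.1.1 he]
  · rintro x e (rfl | he) f (rfl | hf) hxe hxf
    · rfl
    · exact (hdisj x hxe f hf hxf).elim
    · exact (hdisj x hxf e he hxe).elim
    · exact hM.1.2 x e he.1 f hf.1 hxe hxf
  · rintro ⟨e, rfl | ⟨he, hne⟩, hxe⟩ rfl
    · rcases Sym2.mem_iff.1 hxe with rfl | rfl
      exacts [hyz' rfl, hyw rfl]
    · exact hne (hM_at x (Sym2.mem_mk_left x z) e he hxe)
  · by_cases hxz : x = z
    · exact ⟨s(z, w), Or.inl rfl, hxz ▸ Sym2.mem_mk_left z w⟩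
    by_cases hxw : x = w
    · exact ⟨s(z, w), Or.inl rfl, hxw ▸ Sym2.mem_mk_right z w⟩
    obtain ⟨e, he, hxe⟩ := (hM.2 x).2 hxw
    refine ⟨e, Or.inr ⟨he, ?_⟩, hxe⟩
    rintro rfl
    rcases Sym2.mem_iff.1 hxe with rfl | rfl
    exacts [hxy rfl, hxz rfl]

end IsNearPerfectMatchingSet

lemma isAltWalk_iff_isChain {p : G.Walk u v} :
    IsAltWalk M p ↔ p.edges.IsChain (fun e f => e ∈ M ↔ f ∉ M) :=
  Iff.rfl

lemma isBalancedPath_nil : IsBalancedPath M (Walk.nil : G.Walk v v) := by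
  simp [IsBalancedPath, isAltWalk_iff_isChain]

lemma not_isBalancedPath_cons_nil (h : G.Adj u v) :
    ¬ IsBalancedPath M (Walk.cons h Walk.nil) := by
  simp [IsBalancedPath]

lemma isBalancedPath_cons_cons_iff {a b : V} (hua : G.Adj u a) (hab : G.Adj a b)
    (q : G.Walk b v) :
    IsBalancedPath M (.cons hua (.cons hab q)) ↔
      IsBalancedPath M q ∧ s(u, a) ∈ M ∧ s(a, b) ∉ M ∧ u ∉ q.support ∧ a ∉ q.support := by
  have hua' : u ≠ a := G.ne_of_adj hua
  simp only [IsBalancedPath, isAltWalk_iff_isChain, Walk.cons_isPath_iff, Walk.support_cons,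
    List.mem_cons, Walk.length_cons, Nat.even_add_one, Walk.edges_cons, List.isChain_cons_cons,
    List.head?_cons, Option.some.injEq, forall_eq', not_not, hua', false_or]
  rcases q.edges with _ | ⟨f, l⟩ <;>
    simp only [List.IsChain.singleton, List.IsChain.nil, List.isChain_cons_cons, List.head?_nil,
      List.head?_cons, reduceCtorEq, IsEmpty.forall_iff, implies_true, Option.some.injEq,
      forall_eq', and_true] <;>
    tauto

theorem IsBalancedPath.exists_isNearPerfectMatchingSet (hM : IsNearPerfectMatchingSet G M v) :
    ∀ {u : V} (p : G.Walk u v), IsBalancedPath M p →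
      ∃ M', IsNearPerfectMatchingSet G M' u ∧ M' ⊆ M ∪ {e | e ∈ p.edges}
  | _, .nil, _ => ⟨M, hM, Set.subset_union_left⟩
  | _, .cons h .nil, hp => absurd hp (not_isBalancedPath_cons_nil h)
  | u, .cons (v := a) hua (.cons (v := b) hab q), hp => by
    obtain ⟨hq, huaM, -, -, haq⟩ := (isBalancedPath_cons_cons_iff hua hab q).1 hp
    obtain ⟨M', hM', hM'_sub⟩ := exists_isNearPerfectMatchingSet hM q hq
    have huaM' : s(u, a) ∈ M' := by
      obtain ⟨e, he, hae⟩ := (hM'.2 a).2 (G.ne_of_adj hab)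
      rcases hM'_sub he with heM | heq
      · rwa [hM.1.2 a e heM _ huaM hae (Sym2.mem_mk_right u a)] at he
      · exact absurd (Walk.mem_support_of_mem_edges heq hae) haq
    refine ⟨_, hM'.exchange huaM' hab, ?_⟩
    rintro e (rfl | ⟨he, -⟩)
    · simp
    · rcases hM'_sub he with heM | heq
      · exact Or.inl heM
      · exact Or.inr (List.mem_cons_of_mem _ (List.mem_cons_of_mem _ heq))

theorem IsNearPerfectMatchingSet.exists_isBalancedPath [Finite V]
    (hM : IsNearPerfectMatchingSet G M v) (hM' : IsNearPerfectMatchingSet G M' u) :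
    ∃ p : G.Walk u v, IsBalancedPath M p ∧ ∀ e ∈ M ∩ M', ∀ x ∈ e, x ∉ p.support := by
  induction hn : (M' \ M).ncard using Nat.strong_induction_on generalizing u M' with
  | _ n ih =>
  by_cases huv : u = v
  · subst huv
    refine ⟨.nil, isBalancedPath_nil, fun e he x hx hxp => ?_⟩
    rw [Walk.support_nil, List.mem_singleton] at hxp
    exact hM'.notMem_of_mem he.2 (hxp ▸ hx)
  obtain ⟨e, he, hue⟩ := (hM.2 u).2 huv
  obtain ⟨a, rfl⟩ := Sym2.mem_iff_exists.1 hue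
  have hua : G.Adj u a := hM.1.1 he
  obtain ⟨f, hf, haf⟩ := (hM'.2 a).2 (G.ne_of_adj hua).symm
  obtain ⟨b, rfl⟩ := Sym2.mem_iff_exists.1 haf
  have hab : G.Adj a b := hM'.1.1 hf
  have hM'_at_a : ∀ e ∈ M', a ∈ e → e = s(a, b) :=
    fun e he hae => hM'.1.2 a e he _ hf hae (Sym2.mem_mk_left a b)
  have habM : s(a, b) ∉ M := fun habM => hM'.notMem_of_mem hf <|
    hM.1.2 a _ he _ habM (Sym2.mem_mk_right u a) (Sym2.mem_mk_left a b) ▸ Sym2.mem_mk_left u a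
  set M₂ := insert s(a, u) (M' \ {s(b, a)})
  have hM₂ : IsNearPerfectMatchingSet G M₂ b := hM'.exchange (Sym2.eq_swap ▸ hf) hua.symm
  have hlt : (M₂ \ M).ncard < n :=
    hn ▸ Set.ncard_insert_sdiff_singleton_sdiff_lt (Set.toFinite _) (Sym2.eq_swap ▸ he)
      ⟨Sym2.eq_swap ▸ hf, Sym2.eq_swap ▸ habM⟩
  obtain ⟨q, hq, hq_avoid⟩ := ih _ hlt hM₂ rfl
  have huaM₂ : s(u, a) ∈ M ∩ M₂ := ⟨he, Or.inl Sym2.eq_swap⟩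
  refine ⟨.cons hua (.cons hab q), (isBalancedPath_cons_cons_iff hua hab q).2
    ⟨hq, he, habM, hq_avoid _ huaM₂ u (Sym2.mem_mk_left u a),
      hq_avoid _ huaM₂ a (Sym2.mem_mk_right u a)⟩, ?_⟩
  rintro e ⟨heM, heM'⟩ x hx hxp
  simp only [Walk.support_cons, List.mem_cons] at hxp
  rcases hxp with rfl | rfl | hxq
  · exact hM'.notMem_of_mem heM' hx
  · exact habM (hM'_at_a e heM' hx ▸ heM)
  · refine hq_avoid e ⟨heM, Or.inr ⟨heM', fun hba => habM ?_⟩⟩ x hx hxq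
    rwa [hba, Sym2.eq_swap] at heM

lemma IsPerfectMatchingSet.isNearPerfectMatchingSet_image {N : Set (Sym2 ({w}ᶜ : Set V))}
    (hN : IsPerfectMatchingSet (G.induce ({w}ᶜ : Set V)) N) :
    IsNearPerfectMatchingSet G (Sym2.map Subtype.val '' N) w := by
  refine ⟨⟨?_, ?_⟩, fun x => ⟨?_, fun hxw => ?_⟩⟩
  · rintro _ ⟨e, he, rfl⟩
    induction e with
    | _ a b => exact (hN.1 he : (G.induce ({w}ᶜ : Set V)).Adj a b)
  · rintro x _ ⟨e, he, rfl⟩ _ ⟨f, hf, rfl⟩ hxe hxf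
    obtain ⟨a, hae, rfl⟩ := Sym2.mem_map.1 hxe
    obtain ⟨c, hcf, hca⟩ := Sym2.mem_map.1 hxf
    rw [(hN.2 a).unique ⟨he, hae⟩ ⟨hf, Subtype.val_injective hca ▸ hcf⟩]
  · rintro ⟨_, ⟨e, -, rfl⟩, hxe⟩ rfl
    obtain ⟨a, -, hax⟩ := Sym2.mem_map.1 hxe
    exact a.2 hax
  · obtain ⟨e, ⟨he, hxe⟩, -⟩ := hN.2 ⟨x, hxw⟩
    exact ⟨_, ⟨e, he, rfl⟩, Sym2.mem_map.2 ⟨_, hxe, rfl⟩⟩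

lemma IsNearPerfectMatchingSet.isPerfectMatchingSet_preimage
    (hM : IsNearPerfectMatchingSet G M w) :
    IsPerfectMatchingSet (G.induce ({w}ᶜ : Set V)) (Sym2.map Subtype.val ⁻¹' M) := by
  refine ⟨fun e he => ?_, fun x => ?_⟩
  · induction e with
    | _ a b => exact (hM.1.1 he : G.Adj a b)
  obtain ⟨e, he, hxe⟩ := (hM.2 x).2 x.2
  obtain ⟨y, rfl⟩ := Sym2.mem_iff_exists.1 hxe
  have hyw : y ≠ w := fun hyw => hM.notMem_of_mem he (Sym2.mem_iff.2 (Or.inr hyw.symm))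
  refine ⟨s(x, ⟨y, hyw⟩), ⟨he, Sym2.mem_mk_left _ _⟩, fun f ⟨hf, hxf⟩ => ?_⟩
  apply Sym2.map.injective Subtype.val_injective
  exact hM.1.2 x _ hf _ he (Sym2.mem_map.2 ⟨x, hxf, rfl⟩) hxe

lemma factorizable_induce_compl_singleton_iff :
    Factorizable (G.induce ({w}ᶜ : Set V)) ↔ ∃ M, IsNearPerfectMatchingSet G M w :=
  ⟨fun ⟨_, hN⟩ => ⟨_, hN.isNearPerfectMatchingSet_image⟩,
    fun ⟨_, hM⟩ => ⟨_, hM.isPerfectMatchingSet_preimage⟩⟩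

end

theorem stmt11 [Finite V] (G : SimpleGraph V) (M : Set (Sym2 V)) (v : V)
    (hm : IsMatchingSet G M) (hnp : ∀ u : V, (∃ e ∈ M, u ∈ e) ↔ u ≠ v) :
    (∀ w : V, Factorizable (G.induce ({w}ᶜ : Set V))) ↔
      ∀ u : V, ∃ p : G.Walk u v, IsBalancedPath M p := by
  have hM : IsNearPerfectMatchingSet G M v := ⟨hm, hnp⟩
  simp only [factorizable_induce_compl_singleton_iff]
  refine forall_congr' fun u => ⟨fun ⟨M', hM'⟩ => ?_, fun ⟨p, hp⟩ => ?_⟩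
  · obtain ⟨p, hp, -⟩ := hM.exists_isBalancedPath hM'
    exact ⟨p, hp⟩
  · obtain ⟨M', hM', -⟩ := hp.exists_isNearPerfectMatchingSet hM p
    exact ⟨M', hM'⟩
end
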